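/- arXiv:2210.05649 — 2 statements merged into one kernel-verified Lean document; each statement's English description precedes it below -/
import Mathlib

section
/- The Jacobian of the full 7-dimensional co-infection model at the disease-free equilibrium (λ_H/μ_H, 0, 0, 0, 0, 0, 0) has eigenvalues −μ_H (with multiplicity 4), αλ_H/μ_H − (η+γ_C+μ_H+δ_C), βλ_H/μ_H − (η+γ_F+μ_H+δ_F), and αβλ_H/μ_H − (η+γ_CF+μ_H+δ_CF); all have negative real part iff R₀C < 1, R₀F < 1, and R₀CF < 1. -/
open Polynomial

set_option maxHeartbeats 1600000 in
/-- The Jacobian of the full 7-dimensional co-infection model at the DFE has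
characteristic polynomial `(X+μH)⁴ (X-λ₂)(X-λ₄)(X-λ₆)`, and the nontrivial
eigenvalues are all negative iff `R₀C < 1`, `R₀F < 1` and `R₀CF < 1`. -/
theorem jacobian_coinfection_DFE
    (lamH muH α β δC γC δF γF δCF γCF η : ℝ)
    (hlam : 0 < lamH) (hmu : 0 < muH)
    (hα : 0 < α) (hβ : 0 < β)
    (hδC : 0 < δC) (hγC : 0 < γC) (hδF : 0 < δF) (hγF : 0 < γF)
    (hδCF : 0 < δCF) (hγCF : 0 < γCF) (hη : 0 < η)
    (J : Matrix (Fin 7) (Fin 7) ℝ)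
    (hJ : J = !![-muH, -(α*lamH/muH), 0, -(β*lamH/muH), 0,
                   lamH*(α*(β-1) - α*β + β*(α-1))/muH, 0;
                 0, α*lamH/muH - η - γC - muH - δC, 0, 0, 0,
                   -(α*lamH*(β-1))/muH, 0;
                 0, η + γC, -muH, 0, 0, 0, 0;
                 0, 0, 0, β*lamH/muH - η - γF - muH - δF, 0,
                   -(β*lamH*(α-1))/muH, 0;
                 0, 0, 0, η + γF, -muH, 0, 0;
                 0, 0, 0, 0, 0, α*β*lamH/muH - η - γCF - muH - δCF, 0;
                 0, 0, 0, 0, 0, η + γCF, -muH]) :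
    J.charpoly
      = (X + C muH) ^ 4
        * (X - C (α*lamH/muH - (η + γC + muH + δC)))
        * (X - C (β*lamH/muH - (η + γF + muH + δF)))
        * (X - C (α*β*lamH/muH - (η + γCF + muH + δCF))) ∧
    ((α*lamH/muH - (η + γC + muH + δC) < 0 ∧
      β*lamH/muH - (η + γF + muH + δF) < 0 ∧
      α*β*lamH/muH - (η + γCF + muH + δCF) < 0) ↔
     (α * lamH / (muH * (muH + δC + γC + η)) < 1 ∧
      β * lamH / (muH * (muH + δF + γF + η)) < 1 ∧
      α * β * lamH / (muH * (muH + δCF + γCF + η)) < 1)) := by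
  constructor
  · subst hJ
    set c : Equiv.Perm (Fin 7) :=
      ⟨![0, 2, 4, 6, 1, 3, 5], ![0, 4, 1, 5, 2, 6, 3], by decide, by decide⟩ with hc
    have htri : ((Matrix.charmatrix (!![-muH, -(α*lamH/muH), 0, -(β*lamH/muH), 0,
                   lamH*(α*(β-1) - α*β + β*(α-1))/muH, 0;
                 0, α*lamH/muH - η - γC - muH - δC, 0, 0, 0,
                   -(α*lamH*(β-1))/muH, 0;
                 0, η + γC, -muH, 0, 0, 0, 0;
                 0, 0, 0, β*lamH/muH - η - γF - muH - δF, 0,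
                   -(β*lamH*(α-1))/muH, 0;
                 0, 0, 0, η + γF, -muH, 0, 0;
                 0, 0, 0, 0, 0, α*β*lamH/muH - η - γCF - muH - δCF, 0;
                 0, 0, 0, 0, 0, η + γCF, -muH] : Matrix (Fin 7) (Fin 7) ℝ)).submatrix c c).BlockTriangular id := by
      intro i j hij
      fin_cases i <;> fin_cases j <;>
        first
          | exact absurd hij (by decide)
          | exact show (0:ℝ[X]) - C 0 = 0 by simp
    rw [Matrix.charpoly, ← Matrix.det_submatrix_equiv_self c,
      Matrix.det_of_upperTriangular htri, Fin.prod_univ_seven]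
    show (X - C (-muH)) * (X - C (-muH)) * (X - C (-muH)) * (X - C (-muH))
        * (X - C (α*lamH/muH - η - γC - muH - δC))
        * (X - C (β*lamH/muH - η - γF - muH - δF))
        * (X - C (α*β*lamH/muH - η - γCF - muH - δCF)) = _
    simp only [map_neg, map_sub, map_add]
    ring
  · have key : ∀ x s t : ℝ, s = t → 0 < t →
        (x / muH - s < 0 ↔ x / (muH * t) < 1) := by
      intro x s t hst ht
      subst hst
      rw [sub_neg, div_lt_iff₀ hmu, div_lt_one (mul_pos hmu ht), mul_comm]
    constructor
    · rintro ⟨h1, h2, h3⟩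
      exact ⟨(key _ _ _ (by ring) (by linarith)).mp h1,
             (key _ _ _ (by ring) (by linarith)).mp h2,
             (key _ _ _ (by ring) (by linarith)).mp h3⟩
    · rintro ⟨h1, h2, h3⟩
      exact ⟨(key _ _ _ (by ring) (by linarith)).mpr h1,
             (key _ _ _ (by ring) (by linarith)).mpr h2,
             (key _ _ _ (by ring) (by linarith)).mpr h3⟩
end

section
/- Each component of the solution of the full co-infection system remains nonnegative: if all initial values are nonnegative and parameters positive, then S_H(t), I_C(t), I_F(t), I_CF(t), R_C(t), R_F(t), R_CF(t) ≥ 0 for all t ≥ 0. -/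
set_option maxHeartbeats 4000000

open Set Filter


open Set Filter

/-- derivative of y ↦ (min y 0)^2 -/
lemma coinf_hasDerivAt_phi (y : ℝ) :
    HasDerivAt (fun z : ℝ => (min z 0)^2) (2 * min y 0) y := by
  rcases lt_trichotomy y 0 with hy | hy | hy
  · have h1 : HasDerivAt (fun z : ℝ => z^2) (2*y) y := by
      simpa using (hasDerivAt_pow 2 y)
    have h2 : (fun z : ℝ => (min z 0)^2) =ᶠ[nhds y] fun z => z^2 := by
      filter_upwards [Iio_mem_nhds hy] with z hz
      rw [min_eq_left (le_of_lt hz)]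
    rw [min_eq_left (le_of_lt hy)]
    exact h1.congr_of_eventuallyEq h2
  · subst hy
    rw [min_self, mul_zero]
    rw [hasDerivAt_iff_isLittleO]
    rw [Asymptotics.isLittleO_iff]
    intro c hc
    have hev : ∀ᶠ z : ℝ in nhds 0, |z - 0| < c := eventually_abs_sub_lt 0 hc
    filter_upwards [hev] with z hz
    simp only [sub_zero] at hz ⊢
    rw [min_self]
    simp only [smul_eq_mul, mul_zero, sub_zero]
    rw [Real.norm_eq_abs, Real.norm_eq_abs]
    have h0 : ((0:ℝ))^2 = 0 := by norm_num
    rw [h0, sub_zero, abs_of_nonneg (sq_nonneg _)]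
    rcases le_or_gt z 0 with hz0 | hz0
    · rw [min_eq_left hz0]
      nlinarith [abs_nonneg z, sq_abs z, hz]
    · rw [min_eq_right (le_of_lt hz0)]
      have h00 : ((0:ℝ))^2 = 0 := by norm_num
      rw [h00]
      positivity
  · have h2 : (fun z : ℝ => (min z 0)^2) =ᶠ[nhds y] fun _ => (0:ℝ) := by
      filter_upwards [Ioi_mem_nhds hy] with z hz
      rw [min_eq_right (le_of_lt hz)]; norm_num
    rw [min_eq_right (le_of_lt hy), mul_zero]
    exact (hasDerivAt_const y 0).congr_of_eventuallyEq h2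

lemma coinf_hasDerivAt_min_sq {x : ℝ → ℝ} {x' t : ℝ} (h : HasDerivAt x x' t) :
    HasDerivAt (fun s => (min (x s) 0)^2) (2 * min (x t) 0 * x') t :=
  (coinf_hasDerivAt_phi (x t)).comp t h

lemma coinf_frequently_slope {f : ℝ → ℝ} {f' x : ℝ} (h : HasDerivAt f f' x) :
    ∀ r, f' < r → ∃ᶠ z in nhdsWithin x (Ioi x), (z - x)⁻¹ * (f z - f x) < r := by
  intro r hr
  have h1 : Tendsto (slope f x) (nhdsWithin x {x}ᶜ) (nhds f') :=
    hasDerivAt_iff_tendsto_slope.1 h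
  have h2 : Tendsto (slope f x) (nhdsWithin x (Ioi x)) (nhds f') :=
    h1.mono_left (nhdsWithin_mono x (fun z hz => ne_of_gt hz))
  have h3 : ∀ᶠ z in nhdsWithin x (Ioi x), slope f x z < r :=
    h2.eventually (tendsto_id.eventually_lt_const hr)
  refine (h3.mono ?_).frequently
  intro z hz
  rwa [slope_def_field, div_eq_inv_mul] at hz


lemma coinf_min_mul (x : ℝ) : min x 0 * x = (min x 0)^2 := by
  rcases le_or_gt x 0 with h | h
  · rw [min_eq_left h]; ring
  · rw [min_eq_right h.le]; ring

lemma coinf_lin_bound {x A C : ℝ} (hAC : A ≤ C) :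
    min x 0 * (x * A) ≤ C * (min x 0)^2 := by
  have h : min x 0 * (x * A) = (min x 0 * x) * A := by ring
  rw [h, coinf_min_mul]
  nlinarith [sq_nonneg (min x 0)]

lemma coinf_negmul {n y : ℝ} (hn : n ≤ 0) : n * y ≤ (n^2 + (min y 0)^2)/2 := by
  rcases le_or_gt y 0 with h | h
  · rw [min_eq_left h]; nlinarith [sq_nonneg (n - y)]
  · rw [min_eq_right h.le]
    nlinarith [mul_nonneg (neg_nonneg.2 hn) h.le, sq_nonneg n]

lemma coinf_cross_bound {M a b c : ℝ} (hM : 0 ≤ M) (haM : |a| ≤ M) (hbM : |b| ≤ M)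
    (hc : c ≤ 0) :
    c * (a * b) ≤ M * (c^2 + (min a 0)^2 + (min b 0)^2) := by
  have hfact : ∀ u : ℝ, |u| ≤ M → 0 ≤ max u 0 ∧ max u 0 ≤ M ∧ u = max u 0 + min u 0 := by
    intro u hu
    refine ⟨le_max_right _ _, ?_, by rw [max_add_min]; ring⟩
    rcases le_or_gt u 0 with h | h
    · rw [max_eq_right h]; exact hM
    · rw [max_eq_left h.le]; exact (le_abs_self u).trans hu
  obtain ⟨hpa0, hpaM, ha⟩ := hfact a haM
  obtain ⟨hpb0, hpbM, hb⟩ := hfact b hbM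
  have hna0 : min a 0 ≤ 0 := min_le_right _ _
  have hnb0 : min b 0 ≤ 0 := min_le_right _ _
  have hcnb : 0 ≤ c * min b 0 := by
    nlinarith [mul_nonneg (neg_nonneg.2 hc) (neg_nonneg.2 hnb0)]
  have hcna : 0 ≤ c * min a 0 := by
    nlinarith [mul_nonneg (neg_nonneg.2 hc) (neg_nonneg.2 hna0)]
  have h1 : c * (max a 0 * max b 0) ≤ 0 :=
    mul_nonpos_of_nonpos_of_nonneg hc (mul_nonneg hpa0 hpb0)
  have h4 : c * (min a 0 * min b 0) ≤ 0 := by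
    nlinarith [mul_nonneg (neg_nonneg.2 hna0) (neg_nonneg.2 hnb0)]
  have h2 : max a 0 * (c * min b 0) ≤ M * (c * min b 0) :=
    mul_le_mul_of_nonneg_right hpaM hcnb
  have h3 : max b 0 * (c * min a 0) ≤ M * (c * min a 0) :=
    mul_le_mul_of_nonneg_right hpbM hcna
  have h2' : M * (c * min b 0) ≤ M * ((c^2 + (min b 0)^2)/2) :=
    mul_le_mul_of_nonneg_left (by nlinarith [sq_nonneg (c - min b 0)]) hM
  have h3' : M * (c * min a 0) ≤ M * ((c^2 + (min a 0)^2)/2) :=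
    mul_le_mul_of_nonneg_left (by nlinarith [sq_nonneg (c - min a 0)]) hM
  have heq : c * (a * b) = c * (max a 0 * max b 0) + max a 0 * (c * min b 0)
      + max b 0 * (c * min a 0) + c * (min a 0 * min b 0) := by
    nth_rewrite 1 [ha, hb]; ring
  nlinarith [sq_nonneg c, sq_nonneg (min a 0), sq_nonneg (min b 0)]

lemma coinf_treat {η ζ x : ℝ} (hη : 0 < η) (hζ : 0 < ζ) (hd : (1:ℝ)/2 ≤ 1 + ζ*x) :
    0 ≤ min x 0 * (η*x/(1+ζ*x)) ∧ 2*η*min x 0 ≤ η*x/(1+ζ*x) := by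
  have hdpos : 0 < 1 + ζ*x := by linarith
  constructor
  · have h : min x 0 * (η*x/(1+ζ*x)) = η * (min x 0 * x) / (1+ζ*x) := by ring
    rw [h, coinf_min_mul]
    positivity
  · rcases le_or_gt 0 x with h | h
    · rw [min_eq_right h]
      have : 0 ≤ η*x/(1+ζ*x) := by positivity
      linarith
    · rw [min_eq_left h.le, le_div_iff₀ hdpos]
      have h1 : η * x ≤ 0 := mul_nonpos_of_nonneg_of_nonpos hη.le h.le
      have h2 : 0 ≤ 1 + 2*(ζ*x) := by linarith
      nlinarith [mul_nonpos_of_nonpos_of_nonneg h1 h2]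

lemma coinf_pointwise
    (lamH muH α β δC γC δF γF δCF γCF η ζ M : ℝ)
    (hlam : 0 < lamH) (hmu : 0 < muH)
    (hα : 0 < α) (hα1 : α < 1) (hβ : 0 < β) (hβ1 : β < 1)
    (hδC : 0 < δC) (hγC : 0 < γC) (hδF : 0 < δF) (hγF : 0 < γF)
    (hδCF : 0 < δCF) (hγCF : 0 < γCF) (hη : 0 < η) (hζ : 0 < ζ)
    (hM : 0 ≤ M)
    (s ic rc if' rf' icf rcf : ℝ)
    (bS : |s| ≤ M) (bIC : |ic| ≤ M) (bRC : |rc| ≤ M) (bIF : |if'| ≤ M)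
    (bRF : |rf'| ≤ M) (bICF : |icf| ≤ M) (bRCF : |rcf| ≤ M)
    (hdC : (1:ℝ)/2 ≤ 1 + ζ*ic) (hdF : (1:ℝ)/2 ≤ 1 + ζ*if') (hdCF : (1:ℝ)/2 ≤ 1 + ζ*icf) :
    2 * min s 0 * (lamH - muH * s - (α*(1-β) + β*(1-α) + α*β) * s * icf
        - α * s * ic - β * s * if')
    + 2 * min ic 0 * (α * s * ic + α*(1-β) * s * icf - (muH + δC + γC) * ic
        - β * (if' + icf) * ic - η * ic / (1 + ζ * ic))
    + 2 * min rc 0 * (γC * ic + η * ic / (1 + ζ * ic) - muH * rc)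
    + 2 * min if' 0 * (β * s * if' + β*(1-α) * s * icf - (muH + δF + γF) * if'
        - α * (ic + icf) * if' - η * if' / (1 + ζ * if'))
    + 2 * min rf' 0 * (γF * if' + η * if' / (1 + ζ * if') - muH * rf')
    + 2 * min icf 0 * (α*β * s * icf + (α+β) * if' * ic + (α * if' + β * ic) * icf
        - (δCF + γCF + muH) * icf - η * icf / (1 + ζ * icf))
    + 2 * min rcf 0 * (γCF * icf + η * icf / (1 + ζ * icf) - muH * rcf)
    ≤ (2*muH + 36*M + γC + γF + γCF + 6*η) *
      ((min s 0)^2 + (min ic 0)^2 + (min rc 0)^2 + (min if' 0)^2 + (min rf' 0)^2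
        + (min icf 0)^2 + (min rcf 0)^2) := by
  obtain ⟨hs1, hs2⟩ := abs_le.mp bS
  obtain ⟨hic1, hic2⟩ := abs_le.mp bIC
  obtain ⟨hif1, hif2⟩ := abs_le.mp bIF
  obtain ⟨hicf1, hicf2⟩ := abs_le.mp bICF
  have hns : min s 0 ≤ 0 := min_le_right _ _
  have hnic : min ic 0 ≤ 0 := min_le_right _ _
  have hnrc : min rc 0 ≤ 0 := min_le_right _ _
  have hnif : min if' 0 ≤ 0 := min_le_right _ _
  have hnrf : min rf' 0 ≤ 0 := min_le_right _ _
  have hnicf : min icf 0 ≤ 0 := min_le_right _ _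
  have hnrcf : min rcf 0 ≤ 0 := min_le_right _ _
  -- coefficient bounds (proved early, while the context is small)
  have hAS : -(muH + (α*(1-β) + β*(1-α) + α*β) * icf + α * ic + β * if') ≤ muH + 5*M := by
    have hc1 : 0 ≤ α*(1-β) + β*(1-α) + α*β := by nlinarith
    have hc2 : α*(1-β) + β*(1-α) + α*β ≤ 3 := by nlinarith
    nlinarith [mul_nonneg hc1 (by linarith : (0:ℝ) ≤ M + icf),
      mul_nonneg (by linarith : (0:ℝ) ≤ 3 - (α*(1-β) + β*(1-α) + α*β)) hM,
      mul_nonneg hα.le (by linarith : (0:ℝ) ≤ M + ic),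
      mul_nonneg (by linarith : (0:ℝ) ≤ 1 - α) hM,
      mul_nonneg hβ.le (by linarith : (0:ℝ) ≤ M + if'),
      mul_nonneg (by linarith : (0:ℝ) ≤ 1 - β) hM]
  have hAIC : α * s - (muH + δC + γC) - β * (if' + icf) ≤ 3*M := by
    nlinarith [mul_nonneg hα.le (by linarith : (0:ℝ) ≤ M - s),
      mul_nonneg (by linarith : (0:ℝ) ≤ 1 - α) hM,
      mul_nonneg hβ.le (by linarith : (0:ℝ) ≤ M + if'),
      mul_nonneg hβ.le (by linarith : (0:ℝ) ≤ M + icf),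
      mul_nonneg (by linarith : (0:ℝ) ≤ 1 - β) hM]
  have hAIF : β * s - (muH + δF + γF) - α * (ic + icf) ≤ 3*M := by
    nlinarith [mul_nonneg hβ.le (by linarith : (0:ℝ) ≤ M - s),
      mul_nonneg (by linarith : (0:ℝ) ≤ 1 - β) hM,
      mul_nonneg hα.le (by linarith : (0:ℝ) ≤ M + ic),
      mul_nonneg hα.le (by linarith : (0:ℝ) ≤ M + icf),
      mul_nonneg (by linarith : (0:ℝ) ≤ 1 - α) hM]
  have hAICF : α*β * s + α * if' + β * ic - (δCF + γCF + muH) ≤ 3*M := by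
    have hab : 0 ≤ α*β := by positivity
    have hab1 : α*β ≤ 1 := by nlinarith
    nlinarith [mul_nonneg hab (by linarith : (0:ℝ) ≤ M - s),
      mul_nonneg (by linarith : (0:ℝ) ≤ 1 - α*β) hM,
      mul_nonneg hα.le (by linarith : (0:ℝ) ≤ M - if'),
      mul_nonneg (by linarith : (0:ℝ) ≤ 1 - α) hM,
      mul_nonneg hβ.le (by linarith : (0:ℝ) ≤ M - ic),
      mul_nonneg (by linarith : (0:ℝ) ≤ 1 - β) hM]
  have hcC : 0 ≤ α*(1-β) := mul_nonneg hα.le (by linarith)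
  have hcC' : α*(1-β) ≤ 1 := mul_le_one₀ hα1.le (by linarith) (by linarith)
  have hcF : 0 ≤ β*(1-α) := mul_nonneg hβ.le (by linarith)
  have hcF' : β*(1-α) ≤ 1 := mul_le_one₀ hβ1.le (by linarith) (by linarith)
  -- AM-GM facts
  have amC : min rc 0 * min ic 0 ≤ ((min rc 0)^2 + (min ic 0)^2)/2 := by
    nlinarith [sq_nonneg (min rc 0 - min ic 0)]
  have amF : min rf' 0 * min if' 0 ≤ ((min rf' 0)^2 + (min if' 0)^2)/2 := by
    nlinarith [sq_nonneg (min rf' 0 - min if' 0)]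
  have amCF : min rcf 0 * min icf 0 ≤ ((min rcf 0)^2 + (min icf 0)^2)/2 := by
    nlinarith [sq_nonneg (min rcf 0 - min icf 0)]
  obtain ⟨tC1, tC2⟩ := coinf_treat (x := ic) hη hζ hdC
  obtain ⟨tF1, tF2⟩ := coinf_treat (x := if') hη hζ hdF
  obtain ⟨tCF1, tCF2⟩ := coinf_treat (x := icf) hη hζ hdCF
  -- S equation
  have eS : 2 * min s 0 * (lamH - muH * s - (α*(1-β) + β*(1-α) + α*β) * s * icf
      - α * s * ic - β * s * if') ≤ (2*muH + 10*M) * (min s 0)^2 := by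
    have h1 : min s 0 * (s * (-(muH + (α*(1-β) + β*(1-α) + α*β) * icf + α * ic + β * if')))
        ≤ (muH + 5*M) * (min s 0)^2 := coinf_lin_bound hAS
    have h2 : min s 0 * lamH ≤ 0 := mul_nonpos_of_nonpos_of_nonneg hns hlam.le
    linarith [h1, h2]
  -- IC equation
  have eIC : 2 * min ic 0 * (α * s * ic + α*(1-β) * s * icf - (muH + δC + γC) * ic
      - β * (if' + icf) * ic - η * ic / (1 + ζ * ic))
      ≤ 6*M*(min ic 0)^2 + 2*M*((min ic 0)^2 + (min s 0)^2 + (min icf 0)^2) := by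
    have h1 : min ic 0 * (ic * (α * s - (muH + δC + γC) - β * (if' + icf)))
        ≤ 3*M * (min ic 0)^2 := coinf_lin_bound hAIC
    have h2 : min ic 0 * (s * icf) ≤ M * ((min ic 0)^2 + (min s 0)^2 + (min icf 0)^2) :=
      coinf_cross_bound hM bS bICF hnic
    have hR0 : 0 ≤ M * ((min ic 0)^2 + (min s 0)^2 + (min icf 0)^2) :=
      mul_nonneg hM (by positivity)
    have e1 := mul_le_mul_of_nonneg_left h2 hcC
    have e2 := mul_le_mul_of_nonneg_right hcC' hR0
    linarith [h1, e1, e2, tC1]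
  -- RC equation
  have eRC : 2 * min rc 0 * (γC * ic + η * ic / (1 + ζ * ic) - muH * rc)
      ≤ (γC + 2*η) * ((min rc 0)^2 + (min ic 0)^2) := by
    have h1 : min rc 0 * ic ≤ ((min rc 0)^2 + (min ic 0)^2)/2 := coinf_negmul hnrc
    have h1' : γC * (min rc 0 * ic) ≤ γC * (((min rc 0)^2 + (min ic 0)^2)/2) :=
      mul_le_mul_of_nonneg_left h1 hγC.le
    have h2 : min rc 0 * (η * ic / (1 + ζ * ic)) ≤ min rc 0 * (2*η*min ic 0) :=
      mul_le_mul_of_nonpos_left tC2 hnrc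
    have h3' : 2*η*(min rc 0 * min ic 0) ≤ 2*η*(((min rc 0)^2 + (min ic 0)^2)/2) :=
      mul_le_mul_of_nonneg_left amC (by linarith)
    have h4 : muH * (min rc 0 * rc) = muH * (min rc 0)^2 := by rw [coinf_min_mul]
    linarith [h1', h2, h3', h4, mul_nonneg hmu.le (sq_nonneg (min rc 0)),
      mul_nonneg hη.le (sq_nonneg (min rc 0)), mul_nonneg hη.le (sq_nonneg (min ic 0))]
  -- IF equation
  have eIF : 2 * min if' 0 * (β * s * if' + β*(1-α) * s * icf - (muH + δF + γF) * if'
      - α * (ic + icf) * if' - η * if' / (1 + ζ * if'))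
      ≤ 6*M*(min if' 0)^2 + 2*M*((min if' 0)^2 + (min s 0)^2 + (min icf 0)^2) := by
    have h1 : min if' 0 * (if' * (β * s - (muH + δF + γF) - α * (ic + icf)))
        ≤ 3*M * (min if' 0)^2 := coinf_lin_bound hAIF
    have h2 : min if' 0 * (s * icf) ≤ M * ((min if' 0)^2 + (min s 0)^2 + (min icf 0)^2) :=
      coinf_cross_bound hM bS bICF hnif
    have hR0 : 0 ≤ M * ((min if' 0)^2 + (min s 0)^2 + (min icf 0)^2) :=
      mul_nonneg hM (by positivity)
    have e1 := mul_le_mul_of_nonneg_left h2 hcF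
    have e2 := mul_le_mul_of_nonneg_right hcF' hR0
    linarith [h1, e1, e2, tF1]
  -- RF equation
  have eRF : 2 * min rf' 0 * (γF * if' + η * if' / (1 + ζ * if') - muH * rf')
      ≤ (γF + 2*η) * ((min rf' 0)^2 + (min if' 0)^2) := by
    have h1 : min rf' 0 * if' ≤ ((min rf' 0)^2 + (min if' 0)^2)/2 := coinf_negmul hnrf
    have h1' : γF * (min rf' 0 * if') ≤ γF * (((min rf' 0)^2 + (min if' 0)^2)/2) :=
      mul_le_mul_of_nonneg_left h1 hγF.le
    have h2 : min rf' 0 * (η * if' / (1 + ζ * if')) ≤ min rf' 0 * (2*η*min if' 0) :=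
      mul_le_mul_of_nonpos_left tF2 hnrf
    have h3' : 2*η*(min rf' 0 * min if' 0) ≤ 2*η*(((min rf' 0)^2 + (min if' 0)^2)/2) :=
      mul_le_mul_of_nonneg_left amF (by linarith)
    have h4 : muH * (min rf' 0 * rf') = muH * (min rf' 0)^2 := by rw [coinf_min_mul]
    linarith [h1', h2, h3', h4, mul_nonneg hmu.le (sq_nonneg (min rf' 0)),
      mul_nonneg hη.le (sq_nonneg (min rf' 0)), mul_nonneg hη.le (sq_nonneg (min if' 0))]
  -- ICF equation
  have eICF : 2 * min icf 0 * (α*β * s * icf + (α+β) * if' * ic + (α * if' + β * ic) * icf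
      - (δCF + γCF + muH) * icf - η * icf / (1 + ζ * icf))
      ≤ 6*M*(min icf 0)^2 + 4*M*((min icf 0)^2 + (min if' 0)^2 + (min ic 0)^2) := by
    have h1 : min icf 0 * (icf * (α*β * s + α * if' + β * ic - (δCF + γCF + muH)))
        ≤ 3*M * (min icf 0)^2 := coinf_lin_bound hAICF
    have h2 : min icf 0 * (if' * ic) ≤ M * ((min icf 0)^2 + (min if' 0)^2 + (min ic 0)^2) :=
      coinf_cross_bound hM bIF bIC hnicf
    have hR0 : 0 ≤ M * ((min icf 0)^2 + (min if' 0)^2 + (min ic 0)^2) :=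
      mul_nonneg hM (by positivity)
    have e1 := mul_le_mul_of_nonneg_left h2 (by linarith : (0:ℝ) ≤ α + β)
    have e2 := mul_le_mul_of_nonneg_right (by linarith : α + β ≤ 2) hR0
    linarith [h1, e1, e2, tCF1]
  -- RCF equation
  have eRCF : 2 * min rcf 0 * (γCF * icf + η * icf / (1 + ζ * icf) - muH * rcf)
      ≤ (γCF + 2*η) * ((min rcf 0)^2 + (min icf 0)^2) := by
    have h1 : min rcf 0 * icf ≤ ((min rcf 0)^2 + (min icf 0)^2)/2 := coinf_negmul hnrcf
    have h1' : γCF * (min rcf 0 * icf) ≤ γCF * (((min rcf 0)^2 + (min icf 0)^2)/2) :=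
      mul_le_mul_of_nonneg_left h1 hγCF.le
    have h2 : min rcf 0 * (η * icf / (1 + ζ * icf)) ≤ min rcf 0 * (2*η*min icf 0) :=
      mul_le_mul_of_nonpos_left tCF2 hnrcf
    have h3' : 2*η*(min rcf 0 * min icf 0) ≤ 2*η*(((min rcf 0)^2 + (min icf 0)^2)/2) :=
      mul_le_mul_of_nonneg_left amCF (by linarith)
    have h4 : muH * (min rcf 0 * rcf) = muH * (min rcf 0)^2 := by rw [coinf_min_mul]
    linarith [h1', h2, h3', h4, mul_nonneg hmu.le (sq_nonneg (min rcf 0)),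
      mul_nonneg hη.le (sq_nonneg (min rcf 0)), mul_nonneg hη.le (sq_nonneg (min icf 0))]
  -- combine
  have q1 := sq_nonneg (min s 0); have q2 := sq_nonneg (min ic 0)
  have q3 := sq_nonneg (min rc 0); have q4 := sq_nonneg (min if' 0)
  have q5 := sq_nonneg (min rf' 0); have q6 := sq_nonneg (min icf 0)
  have q7 := sq_nonneg (min rcf 0)
  have hQ1 : (min s 0)^2 ≤ (min s 0)^2 + (min ic 0)^2 + (min rc 0)^2 + (min if' 0)^2
      + (min rf' 0)^2 + (min icf 0)^2 + (min rcf 0)^2 := by linarith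
  have hQ2 : (min ic 0)^2 ≤ (min s 0)^2 + (min ic 0)^2 + (min rc 0)^2 + (min if' 0)^2
      + (min rf' 0)^2 + (min icf 0)^2 + (min rcf 0)^2 := by linarith
  have hQ3 : (min ic 0)^2 + (min s 0)^2 + (min icf 0)^2 ≤ (min s 0)^2 + (min ic 0)^2
      + (min rc 0)^2 + (min if' 0)^2 + (min rf' 0)^2 + (min icf 0)^2 + (min rcf 0)^2 := by
    linarith
  have hQ4 : (min rc 0)^2 + (min ic 0)^2 ≤ (min s 0)^2 + (min ic 0)^2 + (min rc 0)^2
      + (min if' 0)^2 + (min rf' 0)^2 + (min icf 0)^2 + (min rcf 0)^2 := by linarith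
  have hQ5 : (min if' 0)^2 ≤ (min s 0)^2 + (min ic 0)^2 + (min rc 0)^2 + (min if' 0)^2
      + (min rf' 0)^2 + (min icf 0)^2 + (min rcf 0)^2 := by linarith
  have hQ6 : (min if' 0)^2 + (min s 0)^2 + (min icf 0)^2 ≤ (min s 0)^2 + (min ic 0)^2
      + (min rc 0)^2 + (min if' 0)^2 + (min rf' 0)^2 + (min icf 0)^2 + (min rcf 0)^2 := by
    linarith
  have hQ7 : (min rf' 0)^2 + (min if' 0)^2 ≤ (min s 0)^2 + (min ic 0)^2 + (min rc 0)^2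
      + (min if' 0)^2 + (min rf' 0)^2 + (min icf 0)^2 + (min rcf 0)^2 := by linarith
  have hQ8 : (min icf 0)^2 ≤ (min s 0)^2 + (min ic 0)^2 + (min rc 0)^2 + (min if' 0)^2
      + (min rf' 0)^2 + (min icf 0)^2 + (min rcf 0)^2 := by linarith
  have hQ9 : (min icf 0)^2 + (min if' 0)^2 + (min ic 0)^2 ≤ (min s 0)^2 + (min ic 0)^2
      + (min rc 0)^2 + (min if' 0)^2 + (min rf' 0)^2 + (min icf 0)^2 + (min rcf 0)^2 := by
    linarith
  have hQ10 : (min rcf 0)^2 + (min icf 0)^2 ≤ (min s 0)^2 + (min ic 0)^2 + (min rc 0)^2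
      + (min if' 0)^2 + (min rf' 0)^2 + (min icf 0)^2 + (min rcf 0)^2 := by linarith
  have pS := mul_le_mul_of_nonneg_left hQ1 (by linarith : (0:ℝ) ≤ 2*muH + 10*M)
  have pIC1 := mul_le_mul_of_nonneg_left hQ2 (by linarith : (0:ℝ) ≤ 6*M)
  have pIC2 := mul_le_mul_of_nonneg_left hQ3 (by linarith : (0:ℝ) ≤ 2*M)
  have pRC := mul_le_mul_of_nonneg_left hQ4 (by linarith : (0:ℝ) ≤ γC + 2*η)
  have pIF1 := mul_le_mul_of_nonneg_left hQ5 (by linarith : (0:ℝ) ≤ 6*M)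
  have pIF2 := mul_le_mul_of_nonneg_left hQ6 (by linarith : (0:ℝ) ≤ 2*M)
  have pRF := mul_le_mul_of_nonneg_left hQ7 (by linarith : (0:ℝ) ≤ γF + 2*η)
  have pICF1 := mul_le_mul_of_nonneg_left hQ8 (by linarith : (0:ℝ) ≤ 6*M)
  have pICF2 := mul_le_mul_of_nonneg_left hQ9 (by linarith : (0:ℝ) ≤ 4*M)
  have pRCF := mul_le_mul_of_nonneg_left hQ10 (by linarith : (0:ℝ) ≤ γCF + 2*η)
  linarith [eS, eIC, eRC, eIF, eRF, eICF, eRCF, pS, pIC1, pIC2, pRC, pIF1, pIF2,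
    pRF, pICF1, pICF2, pRCF]


lemma coinf_key
    (lamH muH α β δC γC δF γF δCF γCF η ζ : ℝ)
    (hlam : 0 < lamH) (hmu : 0 < muH)
    (hα : 0 < α) (hα1 : α < 1) (hβ : 0 < β) (hβ1 : β < 1)
    (hδC : 0 < δC) (hγC : 0 < γC) (hδF : 0 < δF) (hγF : 0 < γF)
    (hδCF : 0 < δCF) (hγCF : 0 < γCF) (hη : 0 < η) (hζ : 0 < ζ)
    (S IC RC IF RF ICF RCF : ℝ → ℝ)
    (cS : Continuous S) (cIC : Continuous IC) (cRC : Continuous RC)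
    (cIF : Continuous IF) (cRF : Continuous RF) (cICF : Continuous ICF)
    (cRCF : Continuous RCF)
    (hS : ∀ t ≥ (0:ℝ), HasDerivAt S
      (lamH - muH * S t
        - (α*(1-β) + β*(1-α) + α*β) * S t * ICF t
        - α * S t * IC t - β * S t * IF t) t)
    (hIC : ∀ t ≥ (0:ℝ), HasDerivAt IC
      (α * S t * IC t + α*(1-β) * S t * ICF t
        - (muH + δC + γC) * IC t - β * (IF t + ICF t) * IC t
        - η * IC t / (1 + ζ * IC t)) t)
    (hRC : ∀ t ≥ (0:ℝ), HasDerivAt RC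
      (γC * IC t + η * IC t / (1 + ζ * IC t) - muH * RC t) t)
    (hIF : ∀ t ≥ (0:ℝ), HasDerivAt IF
      (β * S t * IF t + β*(1-α) * S t * ICF t
        - (muH + δF + γF) * IF t - α * (IC t + ICF t) * IF t
        - η * IF t / (1 + ζ * IF t)) t)
    (hRF : ∀ t ≥ (0:ℝ), HasDerivAt RF
      (γF * IF t + η * IF t / (1 + ζ * IF t) - muH * RF t) t)
    (hICF : ∀ t ≥ (0:ℝ), HasDerivAt ICF
      (α*β * S t * ICF t + (α+β) * IF t * IC t
        + (α * IF t + β * IC t) * ICF t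
        - (δCF + γCF + muH) * ICF t - η * ICF t / (1 + ζ * ICF t)) t)
    (hRCF : ∀ t ≥ (0:ℝ), HasDerivAt RCF
      (γCF * ICF t + η * ICF t / (1 + ζ * ICF t) - muH * RCF t) t)
    (h0 : 0 ≤ S 0 ∧ 0 ≤ IC 0 ∧ 0 ≤ RC 0 ∧ 0 ≤ IF 0 ∧ 0 ≤ RF 0 ∧
          0 ≤ ICF 0 ∧ 0 ≤ RCF 0)
    (b : ℝ) (hb : 0 ≤ b)
    (hbox : ∀ u ∈ Set.Icc (0:ℝ) b, (1:ℝ)/2 ≤ 1 + ζ * IC u ∧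
      (1:ℝ)/2 ≤ 1 + ζ * IF u ∧ (1:ℝ)/2 ≤ 1 + ζ * ICF u) :
    ∀ t ∈ Set.Icc (0:ℝ) b, 0 ≤ S t ∧ 0 ≤ IC t ∧ 0 ≤ RC t ∧ 0 ≤ IF t ∧
      0 ≤ RF t ∧ 0 ≤ ICF t ∧ 0 ≤ RCF t := by
  have hg : Continuous (fun u => |S u| + |IC u| + |RC u| + |IF u| + |RF u|
      + |ICF u| + |RCF u|) :=
    (((((cS.abs.add cIC.abs).add cRC.abs).add cIF.abs).add cRF.abs).add cICF.abs).add cRCF.abs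
  obtain ⟨C, hC⟩ := isCompact_Icc.exists_bound_of_continuousOn hg.continuousOn
  set M := max C 0 with hMdef
  have hM : 0 ≤ M := le_max_right _ _
  have hMall : ∀ u ∈ Set.Icc (0:ℝ) b, |S u| ≤ M ∧ |IC u| ≤ M ∧ |RC u| ≤ M ∧
      |IF u| ≤ M ∧ |RF u| ≤ M ∧ |ICF u| ≤ M ∧ |RCF u| ≤ M := by
    intro u hu
    have h := hC u hu
    rw [Real.norm_eq_abs, abs_of_nonneg (by positivity)] at h
    have hCM : C ≤ M := le_max_left _ _
    have a1 := abs_nonneg (S u); have a2 := abs_nonneg (IC u)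
    have a3 := abs_nonneg (RC u); have a4 := abs_nonneg (IF u)
    have a5 := abs_nonneg (RF u); have a6 := abs_nonneg (ICF u)
    have a7 := abs_nonneg (RCF u)
    exact ⟨by linarith, by linarith, by linarith, by linarith, by linarith,
      by linarith, by linarith⟩
  set w : ℝ → ℝ := fun u =>
    2 * min (S u) 0 * (lamH - muH * S u - (α*(1-β) + β*(1-α) + α*β) * S u * ICF u
        - α * S u * IC u - β * S u * IF u)
    + 2 * min (IC u) 0 * (α * S u * IC u + α*(1-β) * S u * ICF u
        - (muH + δC + γC) * IC u - β * (IF u + ICF u) * IC u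
        - η * IC u / (1 + ζ * IC u))
    + 2 * min (RC u) 0 * (γC * IC u + η * IC u / (1 + ζ * IC u) - muH * RC u)
    + 2 * min (IF u) 0 * (β * S u * IF u + β*(1-α) * S u * ICF u
        - (muH + δF + γF) * IF u - α * (IC u + ICF u) * IF u
        - η * IF u / (1 + ζ * IF u))
    + 2 * min (RF u) 0 * (γF * IF u + η * IF u / (1 + ζ * IF u) - muH * RF u)
    + 2 * min (ICF u) 0 * (α*β * S u * ICF u + (α+β) * IF u * IC u
        + (α * IF u + β * IC u) * ICF u
        - (δCF + γCF + muH) * ICF u - η * ICF u / (1 + ζ * ICF u))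
    + 2 * min (RCF u) 0 * (γCF * ICF u + η * ICF u / (1 + ζ * ICF u) - muH * RCF u)
    with hwdef
  set v : ℝ → ℝ := fun u => (min (S u) 0)^2 + (min (IC u) 0)^2 + (min (RC u) 0)^2
    + (min (IF u) 0)^2 + (min (RF u) 0)^2 + (min (ICF u) 0)^2 + (min (RCF u) 0)^2
    with hvdef
  have hvd : ∀ u : ℝ, 0 ≤ u → HasDerivAt v (w u) u := by
    intro u hu
    simp only [hvdef, hwdef]
    exact ((((((coinf_hasDerivAt_min_sq (hS u hu)).add
      (coinf_hasDerivAt_min_sq (hIC u hu))).add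
      (coinf_hasDerivAt_min_sq (hRC u hu))).add
      (coinf_hasDerivAt_min_sq (hIF u hu))).add
      (coinf_hasDerivAt_min_sq (hRF u hu))).add
      (coinf_hasDerivAt_min_sq (hICF u hu))).add
      (coinf_hasDerivAt_min_sq (hRCF u hu))
  set K := 2*muH + 36*M + γC + γF + γCF + 6*η with hKdef
  have bound : ∀ u ∈ Set.Ico (0:ℝ) b, w u ≤ K * v u + 0 := by
    intro u hu
    have huI : u ∈ Set.Icc (0:ℝ) b := ⟨hu.1, hu.2.le⟩
    obtain ⟨hdC, hdF, hdCF⟩ := hbox u huI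
    obtain ⟨b1, b2, b3, b4, b5, b6, b7⟩ := hMall u huI
    have hp := coinf_pointwise lamH muH α β δC γC δF γF δCF γCF η ζ M
      hlam hmu hα hα1 hβ hβ1 hδC hγC hδF hγF hδCF hγCF hη hζ hM
      (S u) (IC u) (RC u) (IF u) (RF u) (ICF u) (RCF u)
      b1 b2 b3 b4 b5 b6 b7 hdC hdF hdCF
    simp only [hwdef, hvdef, hKdef]
    linarith [hp]
  have hvc : ContinuousOn v (Set.Icc 0 b) := by
    rw [hvdef]
    exact ((((((((cS.min continuous_const).pow 2).add
      ((cIC.min continuous_const).pow 2)).add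
      ((cRC.min continuous_const).pow 2)).add
      ((cIF.min continuous_const).pow 2)).add
      ((cRF.min continuous_const).pow 2)).add
      ((cICF.min continuous_const).pow 2)).add
      ((cRCF.min continuous_const).pow 2)).continuousOn
  have hv0 : v 0 ≤ 0 := by
    simp only [hvdef]
    rw [min_eq_right h0.1, min_eq_right h0.2.1, min_eq_right h0.2.2.1,
      min_eq_right h0.2.2.2.1, min_eq_right h0.2.2.2.2.1,
      min_eq_right h0.2.2.2.2.2.1, min_eq_right h0.2.2.2.2.2.2]
    norm_num
  have hgron := le_gronwallBound_of_liminf_deriv_right_le (f := v) (f' := w)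
    (δ := 0) (K := K) (ε := 0) (a := 0) (b := b) hvc
    (fun x hx r hr => coinf_frequently_slope (hvd x hx.1) r hr) hv0 bound
  intro t ht
  have hvt : v t ≤ 0 := by
    have h := hgron t ht
    rwa [sub_zero, gronwallBound_ε0_δ0] at h
  have hsq : ∀ u : ℝ, (min u 0)^2 ≤ 0 → 0 ≤ u := by
    intro u hu2
    have h2 : min u 0 = 0 :=
      pow_eq_zero_iff two_ne_zero |>.mp (le_antisymm hu2 (sq_nonneg _))
    exact min_eq_right_iff.mp h2
  simp only [hvdef] at hvt
  have q1 := sq_nonneg (min (S t) 0); have q2 := sq_nonneg (min (IC t) 0)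
  have q3 := sq_nonneg (min (RC t) 0); have q4 := sq_nonneg (min (IF t) 0)
  have q5 := sq_nonneg (min (RF t) 0); have q6 := sq_nonneg (min (ICF t) 0)
  have q7 := sq_nonneg (min (RCF t) 0)
  exact ⟨hsq _ (by linarith), hsq _ (by linarith), hsq _ (by linarith),
    hsq _ (by linarith), hsq _ (by linarith), hsq _ (by linarith),
    hsq _ (by linarith)⟩

/-- Nonnegativity of all components of the full co-infection model:
with positive parameters, `α, β ∈ (0,1)`, saturated treatment
`h I = η I/(1+ζ I)`, a global `C¹` solution with nonnegative initial data
stays nonnegative for all `t ≥ 0`. -/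
theorem coinfection_nonnegativity
    (lamH muH α β δC γC δF γF δCF γCF η ζ : ℝ)
    (hlam : 0 < lamH) (hmu : 0 < muH)
    (hα : 0 < α) (hα1 : α < 1) (hβ : 0 < β) (hβ1 : β < 1)
    (hδC : 0 < δC) (hγC : 0 < γC) (hδF : 0 < δF) (hγF : 0 < γF)
    (hδCF : 0 < δCF) (hγCF : 0 < γCF) (hη : 0 < η) (hζ : 0 < ζ)
    (S IC RC IF RF ICF RCF : ℝ → ℝ)
    (hC1 : ContDiff ℝ 1 S ∧ ContDiff ℝ 1 IC ∧ ContDiff ℝ 1 RC ∧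
           ContDiff ℝ 1 IF ∧ ContDiff ℝ 1 RF ∧ ContDiff ℝ 1 ICF ∧
           ContDiff ℝ 1 RCF)
    (hS : ∀ t ≥ (0:ℝ), HasDerivAt S
      (lamH - muH * S t
        - (α*(1-β) + β*(1-α) + α*β) * S t * ICF t
        - α * S t * IC t - β * S t * IF t) t)
    (hIC : ∀ t ≥ (0:ℝ), HasDerivAt IC
      (α * S t * IC t + α*(1-β) * S t * ICF t
        - (muH + δC + γC) * IC t - β * (IF t + ICF t) * IC t
        - η * IC t / (1 + ζ * IC t)) t)
    (hRC : ∀ t ≥ (0:ℝ), HasDerivAt RC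
      (γC * IC t + η * IC t / (1 + ζ * IC t) - muH * RC t) t)
    (hIF : ∀ t ≥ (0:ℝ), HasDerivAt IF
      (β * S t * IF t + β*(1-α) * S t * ICF t
        - (muH + δF + γF) * IF t - α * (IC t + ICF t) * IF t
        - η * IF t / (1 + ζ * IF t)) t)
    (hRF : ∀ t ≥ (0:ℝ), HasDerivAt RF
      (γF * IF t + η * IF t / (1 + ζ * IF t) - muH * RF t) t)
    (hICF : ∀ t ≥ (0:ℝ), HasDerivAt ICF
      (α*β * S t * ICF t + (α+β) * IF t * IC t
        + (α * IF t + β * IC t) * ICF t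
        - (δCF + γCF + muH) * ICF t - η * ICF t / (1 + ζ * ICF t)) t)
    (hRCF : ∀ t ≥ (0:ℝ), HasDerivAt RCF
      (γCF * ICF t + η * ICF t / (1 + ζ * ICF t) - muH * RCF t) t)
    (h0 : 0 ≤ S 0 ∧ 0 ≤ IC 0 ∧ 0 ≤ RC 0 ∧ 0 ≤ IF 0 ∧ 0 ≤ RF 0 ∧
          0 ≤ ICF 0 ∧ 0 ≤ RCF 0) :
    ∀ t ≥ (0:ℝ), 0 ≤ S t ∧ 0 ≤ IC t ∧ 0 ≤ RC t ∧ 0 ≤ IF t ∧ 0 ≤ RF t ∧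
      0 ≤ ICF t ∧ 0 ≤ RCF t := by

  obtain ⟨d1, d2, d3, d4, d5, d6, d7⟩ := hC1
  have cS := d1.continuous
  have cIC := d2.continuous
  have cRC := d3.continuous
  have cIF := d4.continuous
  have cRF := d5.continuous
  have cICF := d6.continuous
  have cRCF := d7.continuous
  intro t ht
  by_contra hcon
  set E := {u : ℝ | u ∈ Set.Icc 0 t ∧
    ¬ (0 ≤ S u ∧ 0 ≤ IC u ∧ 0 ≤ RC u ∧ 0 ≤ IF u ∧ 0 ≤ RF u ∧ 0 ≤ ICF u ∧ 0 ≤ RCF u)}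
    with hEdef
  have htE : t ∈ E := ⟨⟨ht, le_refl t⟩, hcon⟩
  have hEne : E.Nonempty := ⟨t, htE⟩
  have hEbd : BddBelow E := ⟨0, fun u hu => hu.1.1⟩
  set c := sInf E with hcdef
  have hc0 : 0 ≤ c := le_csInf hEne (fun u hu => hu.1.1)
  have hct : c ≤ t := csInf_le hEbd htE
  have hpre : ∀ u, 0 ≤ u → u < c →
      0 ≤ S u ∧ 0 ≤ IC u ∧ 0 ≤ RC u ∧ 0 ≤ IF u ∧ 0 ≤ RF u ∧ 0 ≤ ICF u ∧ 0 ≤ RCF u := by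
    intro u hu huc
    by_contra hnu
    have hcu : c ≤ u := csInf_le hEbd ⟨⟨hu, le_trans huc.le hct⟩, hnu⟩
    linarith
  have hNc : 0 ≤ S c ∧ 0 ≤ IC c ∧ 0 ≤ RC c ∧ 0 ≤ IF c ∧ 0 ≤ RF c ∧ 0 ≤ ICF c ∧ 0 ≤ RCF c := by
    rcases eq_or_lt_of_le hc0 with heq | hlt
    · rw [← heq]; exact h0
    · have hclosed : IsClosed {u : ℝ | 0 ≤ S u ∧ 0 ≤ IC u ∧ 0 ≤ RC u ∧ 0 ≤ IF u ∧
          0 ≤ RF u ∧ 0 ≤ ICF u ∧ 0 ≤ RCF u} := by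
        exact (isClosed_le continuous_const cS).inter
          ((isClosed_le continuous_const cIC).inter
          ((isClosed_le continuous_const cRC).inter
          ((isClosed_le continuous_const cIF).inter
          ((isClosed_le continuous_const cRF).inter
          ((isClosed_le continuous_const cICF).inter
          (isClosed_le continuous_const cRCF))))))
      have h1 : Set.Ico (0:ℝ) c ⊆ {u : ℝ | 0 ≤ S u ∧ 0 ≤ IC u ∧ 0 ≤ RC u ∧ 0 ≤ IF u ∧
          0 ≤ RF u ∧ 0 ≤ ICF u ∧ 0 ≤ RCF u} := fun u hu => hpre u hu.1 hu.2
      have h2 := hclosed.closure_subset_iff.mpr h1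
      rw [closure_Ico (ne_of_lt hlt)] at h2
      exact h2 ⟨hc0, le_refl c⟩
  have hNIcc : ∀ u ∈ Set.Icc (0:ℝ) c,
      0 ≤ S u ∧ 0 ≤ IC u ∧ 0 ≤ RC u ∧ 0 ≤ IF u ∧ 0 ≤ RF u ∧ 0 ≤ ICF u ∧ 0 ≤ RCF u := by
    intro u hu
    rcases lt_or_eq_of_le hu.2 with h | h
    · exact hpre u hu.1 h
    · rw [h]; exact hNc
  have hwmin : Continuous (fun u => min (IC u) (min (IF u) (ICF u))) :=
    cIC.min (cIF.min cICF)
  have hwc : -(1/(2*ζ)) < min (IC c) (min (IF c) (ICF c)) := by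
    have h1 : (0:ℝ) ≤ min (IC c) (min (IF c) (ICF c)) :=
      le_min hNc.2.1 (le_min hNc.2.2.2.1 hNc.2.2.2.2.2.1)
    have h2 : 0 < 1/(2*ζ) := by positivity
    linarith
  have hev : ∀ᶠ u in nhds c, -(1/(2*ζ)) < min (IC u) (min (IF u) (ICF u)) :=
    hwmin.continuousAt.eventually (eventually_gt_nhds hwc)
  obtain ⟨δ, hδ, hball⟩ := Metric.eventually_nhds_iff.mp hev
  have hb0 : (0:ℝ) ≤ c + δ/2 := by linarith
  have hbox : ∀ u ∈ Set.Icc (0:ℝ) (c + δ/2), (1:ℝ)/2 ≤ 1 + ζ * IC u ∧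
      (1:ℝ)/2 ≤ 1 + ζ * IF u ∧ (1:ℝ)/2 ≤ 1 + ζ * ICF u := by
    intro u hu
    have hz : ζ * (1/(2*ζ)) = 1/2 := by field_simp
    rcases le_or_gt u c with h | h
    · obtain ⟨_, n2, _, n4, _, n6, _⟩ := hNIcc u ⟨hu.1, h⟩
      exact ⟨by nlinarith [mul_nonneg hζ.le n2], by nlinarith [mul_nonneg hζ.le n4],
        by nlinarith [mul_nonneg hζ.le n6]⟩
    · have hd : dist u c < δ := by
        rw [Real.dist_eq, abs_of_nonneg (by linarith)]
        have := hu.2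
        linarith
      have hm := hball hd
      have h1 : -(1/(2*ζ)) < IC u := lt_of_lt_of_le hm (min_le_left _ _)
      have h2 : -(1/(2*ζ)) < IF u :=
        lt_of_lt_of_le hm ((min_le_right _ _).trans (min_le_left _ _))
      have h3 : -(1/(2*ζ)) < ICF u :=
        lt_of_lt_of_le hm ((min_le_right _ _).trans (min_le_right _ _))
      refine ⟨?_, ?_, ?_⟩
      · have := mul_lt_mul_of_pos_left h1 hζ
        rw [mul_neg, hz] at this
        linarith
      · have := mul_lt_mul_of_pos_left h2 hζ
        rw [mul_neg, hz] at this
        linarith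
      · have := mul_lt_mul_of_pos_left h3 hζ
        rw [mul_neg, hz] at this
        linarith
  have hkey := coinf_key lamH muH α β δC γC δF γF δCF γCF η ζ
    hlam hmu hα hα1 hβ hβ1 hδC hγC hδF hγF hδCF hγCF hη hζ
    S IC RC IF RF ICF RCF cS cIC cRC cIF cRF cICF cRCF
    hS hIC hRC hIF hRF hICF hRCF h0 (c + δ/2) hb0 hbox
  obtain ⟨e, heE, helt⟩ := Real.lt_sInf_add_pos hEne (half_pos hδ)
  have heb : e ∈ Set.Icc (0:ℝ) (c + δ/2) := ⟨heE.1.1, by rw [hcdef]; linarith⟩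
  exact heE.2 (hkey e heb)
end
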